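/- arXiv:2206.01016 — 7 statements merged into one kernel-verified Lean document; each statement's English description precedes it below -/
import Mathlib

section
/- On the space V = ℓ¹(ℕ, ℝ), define the linear functional φ(x) := Σ_{n=0}^∞ ((n+1)/(n+2))·x_n and N(x) := ‖x‖₁ + φ(x). Then N is a Minkowski norm on V, but there is no constant C > 1 such that N(−x) ≤ C·N(x) for all x ∈ V. -/
noncomputable section

abbrev V1 := lp (fun _ : ℕ => ℝ) 1

lemma V1_summable (x : V1) : Summable fun n => |x n| := by
  have := (lp.memℓp x).summable (by norm_num : 0 < (1 : ENNReal).toReal)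
  simpa using this

lemma coef_nonneg (n : ℕ) : 0 ≤ ((n + 1 : ℝ) / (n + 2)) := by positivity

lemma coef_le_one (n : ℕ) : ((n + 1 : ℝ) / (n + 2)) ≤ 1 := by
  rw [div_le_one (by positivity)]; linarith

lemma phi_summable (x : V1) : Summable fun n : ℕ => ((n + 1 : ℝ) / (n + 2)) * x n := by
  refine Summable.of_norm_bounded (V1_summable x) (fun n : ℕ => ?_)
  rw [Real.norm_eq_abs, abs_mul, abs_of_nonneg (coef_nonneg n)]
  exact mul_le_of_le_one_left (abs_nonneg _) (coef_le_one n)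

lemma V1_norm_eq (x : V1) : ‖x‖ = ∑' n : ℕ, |x n| := by
  have := lp.norm_eq_tsum_rpow (by norm_num : 0 < (1 : ENNReal).toReal) x
  simpa using this

lemma phi_abs_le (x : V1) : |∑' n : ℕ, ((n + 1 : ℝ) / (n + 2)) * x n| ≤ ‖x‖ := by
  rw [V1_norm_eq]
  calc |∑' n : ℕ, ((n + 1 : ℝ) / (n + 2)) * x n| ≤ ∑' n : ℕ, |((n + 1 : ℝ) / (n + 2)) * x n| := by
        simpa only [Real.norm_eq_abs] using norm_tsum_le_tsum_norm ((phi_summable x).norm)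
    _ ≤ ∑' n : ℕ, |x n| := by
        refine Summable.tsum_le_tsum (fun n => ?_) (phi_summable x).abs (V1_summable x)
        rw [abs_mul, abs_of_nonneg (coef_nonneg n)]
        exact mul_le_of_le_one_left (abs_nonneg _) (coef_le_one n)

theorem ell_one_minkowski_norm_not_reversible :
    let V := lp (fun _ : ℕ => ℝ) 1
    let φ : V → ℝ := fun x => ∑' n : ℕ, ((n + 1 : ℝ) / (n + 2)) * x n
    let N : V → ℝ := fun x => ‖x‖ + φ x
    ((∀ x, 0 ≤ N x) ∧
     (∀ (l : ℝ), 0 < l → ∀ x : V, N (l • x) = l * N x) ∧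
     (∀ x y : V, N (x + y) ≤ N x + N y) ∧
     (∀ x : V, x ≠ 0 → N x ≠ 0)) ∧
    ¬ ∃ C : ℝ, 1 < C ∧ ∀ x : V, N (-x) ≤ C * N x := by
  intro V φ N
  have hφsmul : ∀ (l : ℝ) (x : V), φ (l • x) = l * φ x := by
    intro l x
    simp only [φ]
    rw [← tsum_mul_left]
    congr 1; ext n
    have : (l • x) n = l * x n := rfl
    rw [this]; ring
  have hφadd : ∀ x y : V, φ (x + y) = φ x + φ y := by
    intro x y
    simp only [φ]
    rw [← Summable.tsum_add (phi_summable x) (phi_summable y)]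
    congr 1; ext n
    have : (x + y) n = x n + y n := rfl
    rw [this]; ring
  constructor
  · refine ⟨?_, ?_, ?_, ?_⟩
    · intro x
      have := (abs_le.mp (phi_abs_le x)).1
      simp only [N]; linarith
    · intro l hl x
      simp only [N, hφsmul]
      rw [norm_smul, Real.norm_eq_abs, abs_of_pos hl]; ring
    · intro x y
      simp only [N, hφadd]
      have := norm_add_le x y
      linarith
    · intro x hx
      -- N x > 0 since some coordinate nonzero
      have hx' : ∃ k, x k ≠ 0 := by
        by_contra h
        push_neg at h
        exact hx (by ext n; exact h n)
      obtain ⟨k, hk⟩ := hx'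
      have hterm : ∀ n, 0 ≤ |x n| + ((n + 1 : ℝ) / (n + 2)) * x n := by
        intro n
        have h1 : -(|x n|) ≤ ((n + 1 : ℝ) / (n + 2)) * x n := by
          have : |((n + 1 : ℝ) / (n + 2)) * x n| ≤ |x n| := by
            rw [abs_mul, abs_of_nonneg (coef_nonneg n)]
            exact mul_le_of_le_one_left (abs_nonneg _) (coef_le_one n)
          linarith [(abs_le.mp this).1]
        linarith
      have hsum : Summable fun n => |x n| + ((n + 1 : ℝ) / (n + 2)) * x n :=
        (V1_summable x).add (phi_summable x)
      have hNx : N x = ∑' n : ℕ, (|x n| + ((n + 1 : ℝ) / (n + 2)) * x n) := by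
        simp only [N, φ]
        rw [V1_norm_eq, Summable.tsum_add (V1_summable x) (phi_summable x)]
      have hpos : 0 < |x k| + ((k + 1 : ℝ) / (k + 2)) * x k := by
        have h1 : |((k + 1 : ℝ) / (k + 2)) * x k| < |x k| := by
          rw [abs_mul, abs_of_nonneg (coef_nonneg k)]
          have : ((k + 1 : ℝ) / (k + 2)) < 1 := by
            rw [div_lt_one (by positivity)]; linarith
          exact mul_lt_of_lt_one_left (abs_pos.mpr hk) this
        linarith [(abs_lt.mp h1).1]
      have : 0 < N x := by
        rw [hNx]
        exact lt_of_lt_of_le hpos (Summable.le_tsum hsum k (fun n _ => hterm n))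
      linarith
  · rintro ⟨C, hC1, hC⟩
    set k : ℕ := ⌈C⌉₊ with hkdef
    have hCk : C ≤ k := Nat.le_ceil C
    set e : V := lp.single 1 k (1 : ℝ) with he
    have hnorm : ‖e‖ = 1 := by
      have := lp.norm_single (E := fun _ : ℕ => ℝ) (by norm_num : (0 : ENNReal) < 1)
        k (1 : ℝ)
      exact this.trans norm_one
    have hφe : φ e = (k + 1 : ℝ) / (k + 2) := by
      simp only [φ]
      rw [tsum_eq_single k]
      · rw [he, lp.single_apply_self]; ring
      · intro n hn
        rw [he, lp.single_apply_ne 1 k _ hn, mul_zero]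
    have hspec := hC (-e)
    rw [neg_neg] at hspec
    have hNe : N e = 1 + (k + 1 : ℝ) / (k + 2) := by simp [N, hnorm, hφe]
    have hφne : φ (-e) = -((k + 1 : ℝ) / (k + 2)) := by
      have := hφsmul (-1 : ℝ) e
      simp only [neg_smul, one_smul] at this
      rw [this, hφe]; ring
    have hNne : N (-e) = 1 - (k + 1 : ℝ) / (k + 2) := by
      simp [N, hφne, hnorm]; ring
    rw [hNe, hNne] at hspec
    have hk2 : (0:ℝ) < k + 2 := by positivity
    have h1 : 1 - (k + 1 : ℝ) / (k + 2) = 1 / (k + 2) := by field_simp; norm_num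
    have h2 : 1 + (k + 1 : ℝ) / (k + 2) = (2 * k + 3) / (k + 2) := by field_simp; ring_nf
    rw [h1, h2] at hspec
    have : (2 * (k:ℝ) + 3) ≤ C := by
      have := (div_le_div_iff₀ hk2 hk2).mp (by rw [mul_one_div] at hspec; exact hspec : (2 * (k:ℝ) + 3) / (k + 2) ≤ C / (k + 2))
      nlinarith
    nlinarith
end
end

section
/- Let S be a star-shaped subset of a topological real vector space V and p_S its gauge. Then {x : p_S(x) ≤ 1} ⊆ closure({x : p_S(x) < 1}) and interior({x : p_S(x) ≤ 1}) ⊆ {x : p_S(x) < 1}. -/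
open scoped Pointwise

/-- The gauge function of a set, valued in `[0, +∞]`. -/
noncomputable def gaugeE {V : Type*} [AddCommGroup V] [Module ℝ V] (S : Set V) (x : V) :
    ENNReal :=
  ⨅ (l : ℝ) (_ : 0 ≤ l ∧ x ∈ l • S), ENNReal.ofReal l

lemma gaugeE_le {V : Type*} [AddCommGroup V] [Module ℝ V] {S : Set V} {x : V} {l : ℝ}
    (hl : 0 ≤ l) (hx : x ∈ l • S) : gaugeE S x ≤ ENNReal.ofReal l :=
  iInf₂_le l ⟨hl, hx⟩

lemma gaugeE_lt {V : Type*} [AddCommGroup V] [Module ℝ V] {S : Set V} {x : V} {c : ENNReal}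
    (h : gaugeE S x < c) : ∃ l : ℝ, 0 ≤ l ∧ x ∈ l • S ∧ ENNReal.ofReal l < c := by
  rw [gaugeE, iInf_lt_iff] at h
  obtain ⟨l, hl⟩ := h
  rw [iInf_lt_iff] at hl
  obtain ⟨⟨h1, h2⟩, h3⟩ := hl
  exact ⟨l, h1, h2, h3⟩

theorem gauge_sublevel_topology {V : Type*} [AddCommGroup V] [Module ℝ V]
    [TopologicalSpace V] [IsTopologicalAddGroup V] [ContinuousSMul ℝ V] (S : Set V)
    (hstar : ∀ x ∈ S, ∀ t : ℝ, 0 ≤ t → t ≤ 1 → t • x ∈ S) :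
    {x : V | gaugeE S x ≤ 1} ⊆ closure {x : V | gaugeE S x < 1} ∧
    interior {x : V | gaugeE S x ≤ 1} ⊆ {x : V | gaugeE S x < 1} := by
  -- key scaling lemma : if gaugeE S y ≤ 1 and 0 < t < 1 then gaugeE S (t • y) < 1
  have key : ∀ y : V, gaugeE S y ≤ 1 → ∀ t : ℝ, 0 < t → t < 1 → gaugeE S (t • y) < 1 := by
    intro y hy t ht0 ht1
    have h1 : gaugeE S y < ENNReal.ofReal (1 / t) := by
      refine lt_of_le_of_lt hy ?_
      rw [show (1 : ENNReal) = ENNReal.ofReal 1 by simp]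
      exact ENNReal.ofReal_lt_ofReal_iff_of_nonneg (by norm_num) |>.mpr
        (one_lt_one_div ht0 ht1)
    obtain ⟨l, hl0, hlmem, hllt⟩ := gaugeE_lt h1
    have hl_lt : l < 1 / t := by
      have := (ENNReal.ofReal_lt_ofReal_iff (by positivity)).mp hllt
      exact this
    have hmem : t • y ∈ (t * l) • S := by
      obtain ⟨s, hs, rfl⟩ := hlmem
      exact ⟨s, hs, by rw [smul_smul]⟩
    refine lt_of_le_of_lt (gaugeE_le (by positivity) hmem) ?_
    rw [show (1 : ENNReal) = ENNReal.ofReal 1 by simp]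
    refine (ENNReal.ofReal_lt_ofReal_iff_of_nonneg (by positivity)).mpr ?_
    calc t * l < t * (1 / t) := by exact mul_lt_mul_of_pos_left hl_lt ht0
    _ = 1 := by field_simp
  constructor
  · intro x hx
    simp only [Set.mem_setOf_eq] at hx
    have htend : Filter.Tendsto (fun t : ℝ => t • x) (nhdsWithin 1 (Set.Ioo 0 1)) (nhds x) := by
      have : Filter.Tendsto (fun t : ℝ => t • x) (nhds 1) (nhds x) := by
        have : Continuous fun t : ℝ => t • x := continuous_id.smul continuous_const
        simpa only [one_smul] using this.tendsto 1
      exact this.mono_left nhdsWithin_le_nhds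
    have hne : (nhdsWithin (1:ℝ) (Set.Ioo 0 1)).NeBot := by
      apply mem_closure_iff_nhdsWithin_neBot.mp
      rw [closure_Ioo (by norm_num : (0:ℝ) ≠ 1)]
      exact ⟨by norm_num, le_refl 1⟩
    refine mem_closure_of_tendsto htend ?_
    filter_upwards [self_mem_nhdsWithin] with t ht
    exact key x hx t ht.1 ht.2
  · intro x hx
    have hcont : Continuous fun t : ℝ => t • x := continuous_id.smul continuous_const
    have hopen : IsOpen ((fun t : ℝ => t • x) ⁻¹' interior {x : V | gaugeE S x ≤ 1}) :=
      isOpen_interior.preimage hcont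
    have h1mem : (1 : ℝ) ∈ (fun t : ℝ => t • x) ⁻¹' interior {x : V | gaugeE S x ≤ 1} := by
      simpa using hx
    -- find t > 1 in this open set
    have h1cl : (1 : ℝ) ∈ closure (Set.Ioi (1 : ℝ)) := by
      rw [closure_Ioi]; exact Set.self_mem_Ici
    obtain ⟨t, htU, htgt⟩ := mem_closure_iff_nhds.mp h1cl _ (hopen.mem_nhds h1mem)
    have ht1 : (1 : ℝ) < t := htgt
    have ht0 : (0 : ℝ) < t := lt_trans one_pos ht1
    have hty : gaugeE S (t • x) ≤ 1 := by
      have h : t • x ∈ interior {x : V | gaugeE S x ≤ 1} := htU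
      simpa using interior_subset h
    have h1 : gaugeE S (t • x) < ENNReal.ofReal t := by
      refine lt_of_le_of_lt hty ?_
      rw [show (1 : ENNReal) = ENNReal.ofReal 1 by simp]
      exact (ENNReal.ofReal_lt_ofReal_iff_of_nonneg (by norm_num)).mpr ht1
    obtain ⟨l, hl0, hlmem, hllt⟩ := gaugeE_lt h1
    have hl_lt : l < t := (ENNReal.ofReal_lt_ofReal_iff ht0).mp hllt
    have hmem : x ∈ (l / t) • S := by
      obtain ⟨s, hs, hse⟩ := hlmem
      refine ⟨s, hs, ?_⟩
      have : x = (1 / t) • (t • x) := by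
        rw [smul_smul]; field_simp; rw [one_smul]
      rw [this, ← hse, smul_smul]
      ring_nf
    show gaugeE S x < 1
    refine lt_of_le_of_lt (gaugeE_le (by positivity) hmem) ?_
    rw [show (1 : ENNReal) = ENNReal.ofReal 1 by simp]
    refine (ENNReal.ofReal_lt_ofReal_iff_of_nonneg (by positivity)).mpr ?_
    rw [div_lt_one ht0]; exact hl_lt
end

section
/- Let S be a star-shaped subset of a topological real vector space V and p_S its gauge (valued in [0,+∞]). Then p_S is continuous if and only if {x : p_S(x) = 1} equals the topological boundary of S. -/
open scoped Pointwise

section aux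

variable {V : Type*} [AddCommGroup V] [Module ℝ V] {S : Set V}

lemma gaugeE_le_of_mem {a : ℝ} (ha : 0 ≤ a) {x : V} (hx : x ∈ a • S) :
    gaugeE S x ≤ ENNReal.ofReal a :=
  iInf₂_le a ⟨ha, hx⟩

lemma mem_smul_of_gaugeE_lt (hstar : ∀ x ∈ S, ∀ t : ℝ, 0 ≤ t → t ≤ 1 → t • x ∈ S)
    {a : ℝ} (ha : 0 < a) {x : V} (h : gaugeE S x < ENNReal.ofReal a) : x ∈ a • S := by
  simp only [gaugeE, iInf_lt_iff] at h
  obtain ⟨l, ⟨hl0, hlS⟩, hlt⟩ := h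
  obtain ⟨s, hs, rfl⟩ := hlS
  have hla : l < a := (ENNReal.ofReal_lt_ofReal_iff ha).1 hlt
  refine ⟨(a⁻¹ * l) • s, hstar s hs _ (by positivity) ?_, ?_⟩
  · rw [inv_mul_le_iff₀ ha, mul_one]
    exact hla.le
  · show a • (a⁻¹ * l) • s = l • s
    rw [smul_smul, ← mul_assoc, mul_inv_cancel₀ ha.ne', one_mul]

lemma gaugeE_smul_le {t : ℝ} (ht : 0 < t) (x : V) :
    gaugeE S (t • x) ≤ ENNReal.ofReal t * gaugeE S x := by
  have h0 : ENNReal.ofReal t ≠ 0 := (ENNReal.ofReal_pos.2 ht).ne'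
  have hrw : ENNReal.ofReal t * gaugeE S x
      = ⨅ l : {l : ℝ // 0 ≤ l ∧ x ∈ l • S}, ENNReal.ofReal t * ENNReal.ofReal l.1 := by
    rw [gaugeE, iInf_subtype']
    exact ENNReal.mul_iInf' (fun h => absurd h ENNReal.ofReal_ne_top)
      (fun h => absurd h h0)
  rw [hrw]
  refine le_iInf fun l => ?_
  obtain ⟨l, hl0, hlS⟩ := l
  obtain ⟨s, hs, rfl⟩ := hlS
  have : t • l • s ∈ (t * l) • S := by
    rw [smul_smul]
    exact Set.smul_mem_smul_set hs
  calc gaugeE S (t • l • s) ≤ ENNReal.ofReal (t * l) := gaugeE_le_of_mem (by positivity) this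
  _ = ENNReal.ofReal t * ENNReal.ofReal l := ENNReal.ofReal_mul ht.le

lemma gaugeE_smul {t : ℝ} (ht : 0 < t) (x : V) :
    gaugeE S (t • x) = ENNReal.ofReal t * gaugeE S x := by
  refine le_antisymm (gaugeE_smul_le ht x) ?_
  have h := gaugeE_smul_le (S := S) (inv_pos.2 ht) (t • x)
  rw [inv_smul_smul₀ ht.ne'] at h
  calc ENNReal.ofReal t * gaugeE S x
      ≤ ENNReal.ofReal t * (ENNReal.ofReal t⁻¹ * gaugeE S (t • x)) := mul_le_mul_right h _
  _ = gaugeE S (t • x) := by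
      rw [← mul_assoc, ← ENNReal.ofReal_mul ht.le, mul_inv_cancel₀ ht.ne',
        ENNReal.ofReal_one, one_mul]

lemma mem_of_gaugeE_lt_one (hstar : ∀ x ∈ S, ∀ t : ℝ, 0 ≤ t → t ≤ 1 → t • x ∈ S)
    {x : V} (h : gaugeE S x < 1) : x ∈ S := by
  have := mem_smul_of_gaugeE_lt hstar one_pos (x := x) (by simpa using h)
  simpa using this

lemma gaugeE_le_one_of_mem {x : V} (hx : x ∈ S) : gaugeE S x ≤ 1 := by
  have : x ∈ (1 : ℝ) • S := by simpa using hx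
  simpa using gaugeE_le_of_mem zero_le_one this

end aux

lemma continuous_into_ennreal {X : Type*} [TopologicalSpace X] {f : X → ENNReal}
    (h1 : ∀ a : ENNReal, IsOpen {x | f x < a}) (h2 : ∀ a : ENNReal, IsOpen {x | a < f x}) :
    Continuous f := by
  rw [continuous_iff_coinduced_le,
    (OrderTopology.topology_eq_generate_intervals (α := ENNReal))]
  refine le_generateFrom ?_
  rintro s ⟨a, rfl | rfl⟩
  · exact isOpen_coinduced.mpr (h2 a)
  · exact isOpen_coinduced.mpr (h1 a)

theorem gauge_continuous_iff_level_one_eq_frontier {V : Type*} [AddCommGroup V] [Module ℝ V]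
    [TopologicalSpace V] [IsTopologicalAddGroup V] [ContinuousSMul ℝ V] (S : Set V)
    (hstar : ∀ x ∈ S, ∀ t : ℝ, 0 ≤ t → t ≤ 1 → t • x ∈ S) :
    Continuous (gaugeE S) ↔ {x : V | gaugeE S x = 1} = frontier S := by
  -- the level set is always contained in the frontier
  have hsub : {x : V | gaugeE S x = 1} ⊆ frontier S := by
    intro x hx
    have hx1 : gaugeE S x = 1 := hx
    rw [frontier_eq_closure_inter_closure]
    have htend : Filter.Tendsto (fun t : ℝ => t • x) (nhds 1) (nhds x) := by
      have hc' : Continuous fun t : ℝ => t • x :=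
        continuous_id.smul (continuous_const : Continuous fun _ : ℝ => x)
      have := hc'.tendsto 1
      simpa only [id_eq, one_smul] using this
    constructor
    · refine mem_closure_of_tendsto
        (htend.mono_left (nhdsWithin_le_nhds : nhdsWithin (1:ℝ) (Set.Iio 1) ≤ _)) ?_
      filter_upwards [Ioo_mem_nhdsLT_of_mem (by simp : (1:ℝ) ∈ Set.Ioc 0 1)] with t ht
      apply mem_of_gaugeE_lt_one hstar
      rw [gaugeE_smul ht.1, hx1, mul_one]
      exact ENNReal.ofReal_lt_one.2 ht.2
    · refine mem_closure_of_tendsto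
        (htend.mono_left (nhdsWithin_le_nhds : nhdsWithin (1:ℝ) (Set.Ioi 1) ≤ _)) ?_
      filter_upwards [Ioo_mem_nhdsGT_of_mem (by simp : (1:ℝ) ∈ Set.Ico 1 2)] with t ht
      intro hmem
      have h1 : gaugeE S (t • x) ≤ 1 := gaugeE_le_one_of_mem hmem
      rw [gaugeE_smul (lt_trans one_pos ht.1), hx1, mul_one] at h1
      exact absurd h1 (not_le.2 (ENNReal.one_lt_ofReal.2 ht.1))
  constructor
  · intro hc
    refine Set.Subset.antisymm hsub ?_
    intro x hx
    by_contra hne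
    rcases lt_or_gt_of_ne hne with hlt | hgt
    · -- gaugeE S x < 1 : then x is in the interior
      have hopen : IsOpen {y : V | gaugeE S y < 1} := isOpen_lt hc continuous_const
      have hint : x ∈ interior S :=
        interior_maximal (fun y hy => mem_of_gaugeE_lt_one hstar hy) hopen hlt
      rw [frontier_eq_closure_inter_closure] at hx
      rw [closure_compl] at hx
      exact hx.2 hint
    · -- 1 < gaugeE S x : then x is not in the closure
      have hopen : IsOpen {y : V | 1 < gaugeE S y} := isOpen_lt continuous_const hc
      have hsubc : {y : V | 1 < gaugeE S y} ⊆ Sᶜ :=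
        fun y hy hyS => absurd (gaugeE_le_one_of_mem hyS) (not_le.2 hy)
      have hint : x ∈ interior Sᶜ := interior_maximal hsubc hopen hgt
      rw [interior_compl] at hint
      exact hint (frontier_subset_closure hx)
  · intro heq
    -- interior S = {gauge < 1}
    have hInt : interior S = {x : V | gaugeE S x < 1} := by
      ext x
      constructor
      · intro hx
        have hle := gaugeE_le_one_of_mem (interior_subset hx)
        refine lt_of_le_of_ne hle fun h => ?_
        have hfr : x ∈ frontier S := heq ▸ h
        rw [frontier_eq_closure_inter_closure, closure_compl] at hfr
        exact hfr.2 hx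
      · intro hx
        have hxS : x ∈ S := mem_of_gaugeE_lt_one hstar hx
        have hnf : x ∉ frontier S := by
          rw [← heq]; exact fun h => absurd (h : gaugeE S x = 1) hx.ne
        by_contra hni
        exact hnf ⟨subset_closure hxS, hni⟩
    -- complement of closure S = {1 < gauge}
    have hCl : (closure S)ᶜ = {x : V | 1 < gaugeE S x} := by
      ext x
      constructor
      · intro hx
        have hxS : x ∉ S := fun h => hx (subset_closure h)
        have h1 : ¬ gaugeE S x < 1 := fun h => hxS (mem_of_gaugeE_lt_one hstar h)
        have h2 : gaugeE S x ≠ 1 := by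
          intro h
          exact hx (frontier_subset_closure (heq ▸ h))
        exact lt_of_le_of_ne (not_lt.1 h1) (Ne.symm h2)
      · intro hx hxc
        rw [closure_eq_self_union_frontier] at hxc
        rcases hxc with h | h
        · exact absurd (gaugeE_le_one_of_mem h) (not_le.2 hx)
        · rw [← heq] at h
          exact absurd (h : gaugeE S x = 1) (ne_of_gt hx)
    have hO1 : IsOpen {x : V | gaugeE S x < 1} := hInt ▸ isOpen_interior
    have hO2 : IsOpen {x : V | 1 < gaugeE S x} := hCl ▸ isClosed_closure.isOpen_compl
    -- scaling
    have key : ∀ c : ℝ, 0 < c → ∀ x : V,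
        gaugeE S (c⁻¹ • x) = (ENNReal.ofReal c)⁻¹ * gaugeE S x := by
      intro c hc x
      rw [gaugeE_smul (inv_pos.2 hc), ENNReal.ofReal_inv_of_pos hc]
    have hc0 : ∀ c : ℝ, 0 < c → ENNReal.ofReal c ≠ 0 := fun c hc => (ENNReal.ofReal_pos.2 hc).ne'
    have hlt : ∀ b : ENNReal, b ≠ 0 → b ≠ ⊤ → IsOpen {x : V | gaugeE S x < b} := by
      intro b hb0 hbt
      have hcpos : 0 < b.toReal := ENNReal.toReal_pos hb0 hbt
      have hb : ENNReal.ofReal b.toReal = b := ENNReal.ofReal_toReal hbt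
      have h0' : ENNReal.ofReal b.toReal ≠ 0 := by rw [hb]; exact hb0
      have ht' : ENNReal.ofReal b.toReal ≠ ⊤ := ENNReal.ofReal_ne_top
      have hset : {x : V | gaugeE S x < b} = (fun x : V => b.toReal⁻¹ • x) ⁻¹' {y | gaugeE S y < 1} := by
        ext x
        simp only [Set.mem_preimage, Set.mem_setOf_eq]
        rw [key b.toReal hcpos, ← ENNReal.div_eq_inv_mul,
          ENNReal.div_lt_iff (Or.inl h0') (Or.inl ht'), one_mul, hb]
      rw [hset]
      exact hO1.preimage (continuous_const_smul _)
    have hgt : ∀ b : ENNReal, b ≠ 0 → b ≠ ⊤ → IsOpen {x : V | b < gaugeE S x} := by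
      intro b hb0 hbt
      have hcpos : 0 < b.toReal := ENNReal.toReal_pos hb0 hbt
      have hb : ENNReal.ofReal b.toReal = b := ENNReal.ofReal_toReal hbt
      have h0' : ENNReal.ofReal b.toReal ≠ 0 := by rw [hb]; exact hb0
      have ht' : ENNReal.ofReal b.toReal ≠ ⊤ := ENNReal.ofReal_ne_top
      have hset : {x : V | b < gaugeE S x} = (fun x : V => b.toReal⁻¹ • x) ⁻¹' {y | 1 < gaugeE S y} := by
        ext x
        simp only [Set.mem_preimage, Set.mem_setOf_eq]
        rw [key b.toReal hcpos, ← ENNReal.div_eq_inv_mul,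
          ENNReal.lt_div_iff_mul_lt (Or.inl h0') (Or.inl ht'), one_mul, hb]
      rw [hset]
      exact hO2.preimage (continuous_const_smul _)
    refine continuous_into_ennreal ?_ ?_
    · intro a
      have hset : {x : V | gaugeE S x < a}
          = ⋃ b ∈ {b : ENNReal | b ≠ 0 ∧ b ≠ ⊤ ∧ b < a}, {x : V | gaugeE S x < b} := by
        ext x
        simp only [Set.mem_iUnion, Set.mem_setOf_eq, exists_prop]
        constructor
        · intro hx
          obtain ⟨b, hb1, hb2⟩ := exists_between hx
          exact ⟨b, ⟨(pos_of_gt hb1).ne', (hb2.trans_le le_top).ne, hb2⟩, hb1⟩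
        · rintro ⟨b, ⟨-, -, hba⟩, hxb⟩
          exact hxb.trans hba
      rw [hset]
      exact isOpen_biUnion fun b hb => hlt b hb.1 hb.2.1
    · intro a
      have hset : {x : V | a < gaugeE S x}
          = ⋃ b ∈ {b : ENNReal | b ≠ 0 ∧ b ≠ ⊤ ∧ a < b}, {x : V | b < gaugeE S x} := by
        ext x
        simp only [Set.mem_iUnion, Set.mem_setOf_eq, exists_prop]
        constructor
        · intro hx
          obtain ⟨b, hb1, hb2⟩ := exists_between hx
          exact ⟨b, ⟨(pos_of_gt hb1).ne', (hb2.trans_le le_top).ne, hb1⟩, hb2⟩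
        · rintro ⟨b, ⟨-, -, hab⟩, hxb⟩
          exact hab.trans hxb
      rw [hset]
      exact isOpen_biUnion fun b hb => hgt b hb.1 hb.2.1
end

section
/- Let C be a strictly convex cone with non-empty interior in a topological real vector space V, and suppose C ≠ V. Then V is one-dimensional and C ∪ {0} is a ray, i.e., there is a nonzero x ∈ V with C ∪ {0} = {tx : t ≥ 0}. -/
open Pointwise

/-- The relative closure of a set: its closure within its affine hull. -/
def relCl {V : Type*} [AddCommGroup V] [Module ℝ V] [TopologicalSpace V] (C : Set V) : Set V :=
  closure C ∩ (affineSpan ℝ C : Set V)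

/-- The relative interior of a set: its interior within its affine hull. -/
def relInt {V : Type*} [AddCommGroup V] [Module ℝ V] [TopologicalSpace V] (C : Set V) : Set V :=
  {x | x ∈ (affineSpan ℝ C : Set V) ∧
    ∃ U : Set V, IsOpen U ∧ x ∈ U ∧ U ∩ (affineSpan ℝ C : Set V) ⊆ C}

/-- A set is strictly convex if any open segment between two distinct points of its
relative closure lies in its relative interior. -/
def StrictlyConvexSet {V : Type*} [AddCommGroup V] [Module ℝ V] [TopologicalSpace V]
    (C : Set V) : Prop :=
  ∀ x ∈ relCl C, ∀ y ∈ relCl C, x ≠ y → ∀ t : ℝ, 0 < t → t < 1 →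
    (1 - t) • x + t • y ∈ relInt C

theorem strictly_convex_cone_is_ray {V : Type*} [AddCommGroup V] [Module ℝ V]
    [TopologicalSpace V] [IsTopologicalAddGroup V] [ContinuousSMul ℝ V]
    (C : Set V) (hcone : ∀ (l : ℝ), 0 < l → ∀ x ∈ C, l • x ∈ C)
    (hsc : StrictlyConvexSet C) (hint : (interior C).Nonempty)
    (hne : C ≠ Set.univ) :
    Module.finrank ℝ V = 1 ∧
    ∃ x : V, x ≠ 0 ∧ C ∪ {0} = {y : V | ∃ t : ℝ, 0 ≤ t ∧ y = t • x} := by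
  obtain ⟨u, hu⟩ := hint
  -- The affine span of C is everything, since C has nonempty interior.
  have hspan : (affineSpan ℝ C : Set V) = Set.univ := by
    apply Set.eq_univ_of_forall
    intro x
    obtain ⟨U, hUC, hUo, huU⟩ := mem_interior.1 hu
    have hcont : Continuous fun t : ℝ => u + t • (x - u) := by continuity
    have hmem : (fun t : ℝ => u + t • (x - u)) ⁻¹' U ∈ nhds (0 : ℝ) := by
      refine (hUo.preimage hcont).mem_nhds ?_
      simpa using huU
    obtain ⟨ε, hε1, hε2⟩ :=
      Filter.nonempty_of_mem (Filter.inter_mem (nhdsWithin_le_nhds hmem) self_mem_nhdsWithin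
        (f := nhdsWithin 0 (Set.Ioi (0:ℝ))))
    have hεpos : (0:ℝ) < ε := hε2
    have hv : u + ε • (x - u) ∈ C := hUC hε1
    have huC : u ∈ C := hUC huU
    have : ε⁻¹ • ((u + ε • (x - u)) -ᵥ u) +ᵥ u ∈ affineSpan ℝ C :=
      AffineSubspace.smul_vsub_vadd_mem _ ε⁻¹ (subset_affineSpan ℝ C hv)
        (subset_affineSpan ℝ C huC) (subset_affineSpan ℝ C huC)
    have heq : ε⁻¹ • ((u + ε • (x - u)) -ᵥ u) +ᵥ u = x := by
      simp only [vsub_eq_sub, vadd_eq_add, add_sub_cancel_left, smul_smul,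
        inv_mul_cancel₀ (ne_of_gt hεpos), one_smul]
      abel
    rwa [heq] at this
  -- Restate strict convexity with ordinary closure/interior.
  have hsc' : ∀ x ∈ closure C, ∀ y ∈ closure C, x ≠ y → ∀ t : ℝ, 0 < t → t < 1 →
      (1 - t) • x + t • y ∈ interior C := by
    intro x hx y hy hxy t ht0 ht1
    have h := hsc x ⟨hx, by rw [hspan]; trivial⟩ y ⟨hy, by rw [hspan]; trivial⟩ hxy t ht0 ht1
    obtain ⟨-, U, hUo, hxU, hUC⟩ := h
    exact mem_interior.2 ⟨U, by rw [hspan] at hUC; simpa using hUC, hUo, hxU⟩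
  -- closure and interior are invariant under positive scaling
  have hclos : ∀ l : ℝ, 0 < l → ∀ x ∈ closure C, l • x ∈ closure C := by
    intro l hl x hx
    exact map_mem_closure (continuous_const_smul l) hx (fun y hy => hcone l hl y hy)
  have hintr : ∀ l : ℝ, 0 < l → ∀ x ∈ interior C, l • x ∈ interior C := by
    intro l hl x hx
    have hsub : l • interior C ⊆ C := by
      rintro - ⟨w, hw, rfl⟩
      exact hcone l hl w (interior_subset hw)
    exact interior_maximal hsub (isOpen_interior.smul₀ (ne_of_gt hl))
      ⟨x, hx, rfl⟩
  -- every nonzero point of the closure is interior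
  have hkey : ∀ x ∈ closure C, x ≠ 0 → x ∈ interior C := by
    intro x hx hx0
    have h2x : (2:ℝ) • x ∈ closure C := hclos 2 (by norm_num) x hx
    have hne2 : x ≠ (2:ℝ) • x := by
      intro h
      apply hx0
      have : (1:ℝ) • x = (2:ℝ) • x := by rw [one_smul]; exact h
      have h2 : ((2:ℝ) - 1) • x = 0 := by rw [sub_smul, ← this, sub_self]
      rcases smul_eq_zero.1 h2 with h | h
      · norm_num at h
      · exact h
    have hmid := hsc' x hx ((2:ℝ) • x) h2x hne2 (1/2) (by norm_num) (by norm_num)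
    have heq : (1 - 1/2 : ℝ) • x + (1/2 : ℝ) • ((2:ℝ) • x) = (3/2 : ℝ) • x := by
      rw [smul_smul, ← add_smul]; norm_num
    rw [heq] at hmid
    have := hintr (2/3) (by norm_num) _ hmid
    rwa [smul_smul, show (2/3 : ℝ) * (3/2) = 1 by norm_num, one_smul] at this
  have : PreconnectedSpace V :=
    ⟨by simpa using (convex_univ : Convex ℝ (Set.univ : Set V)).isPreconnected⟩
  -- 0 is in the closure but not the interior (else C would be clopen, hence univ)
  have hclopen : ¬ closure C ⊆ interior C := by
    intro hsub
    have hCi : C = interior C := subset_antisymm (subset_closure.trans hsub) interior_subset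
    have hCc : closure C = C := subset_antisymm (hsub.trans interior_subset) subset_closure
    have : IsClopen C := ⟨closure_eq_iff_isClosed.1 hCc, hCi ▸ isOpen_interior⟩
    exact hne (this.eq_univ ⟨u, interior_subset hu⟩)
  have h0i : (0:V) ∉ interior C := by
    intro h0
    exact hclopen fun x hx => by
      rcases eq_or_ne x 0 with rfl | hx0
      · exact h0
      · exact hkey x hx hx0
  have h0c : (0:V) ∈ closure C := by
    by_contra h0
    exact hclopen fun x hx => hkey x hx (fun h => h0 (h ▸ hx))
  -- pointedness
  have hpt : ∀ x : V, x ∈ closure C → -x ∈ closure C → x = 0 := by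
    intro x hx hnx
    by_contra hx0
    have hxne : x ≠ -x := by
      intro h
      apply hx0
      have : x + x = 0 := by nth_rewrite 2 [h]; simp
      have h2 : (2:ℝ) • x = 0 := by rw [two_smul]; exact this
      simpa using (smul_eq_zero.1 h2).resolve_left (by norm_num)
    have := hsc' x hx (-x) hnx hxne (1/2) (by norm_num) (by norm_num)
    have heq : (1 - 1/2 : ℝ) • x + (1/2 : ℝ) • (-x) = 0 := by
      rw [smul_neg, ← sub_eq_add_neg, ← sub_smul]; norm_num
    rw [heq] at this
    exact h0i this
  have hu0 : u ≠ 0 := fun h => h0i (h ▸ hu)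
  have : Nontrivial V := ⟨u, 0, hu0⟩
  -- the rank is 1
  have hrank : Module.rank ℝ V = 1 := by
    have hle : Module.rank ℝ V ≤ 1 := by
      by_contra hlt
      push_neg at hlt
      have hconn : IsPreconnected ({(0:V)}ᶜ) :=
        (isPathConnected_compl_singleton_of_one_lt_rank hlt 0).isConnected.isPreconnected
      have hccne : closure C ≠ Set.univ := by
        intro hcu
        have hmu : -u ∈ closure C := by rw [hcu]; trivial
        exact hu0 (hpt u (subset_closure (interior_subset hu)) hmu)
      obtain ⟨v, hv⟩ : ∃ v : V, v ∉ closure C := by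
        by_contra h
        push_neg at h
        exact hccne (Set.eq_univ_of_forall h)
      have hv0 : v ≠ 0 := fun h => hv (h ▸ h0c)
      have hcover : ({(0:V)}ᶜ : Set V) ⊆ interior C ∪ (closure C)ᶜ := by
        intro x hx
        rcases em (x ∈ closure C) with hxc | hxc
        · exact Or.inl (hkey x hxc hx)
        · exact Or.inr hxc
      obtain ⟨w, -, hw1, hw2⟩ := hconn (interior C) ((closure C)ᶜ) isOpen_interior
        (isClosed_closure.isOpen_compl) hcover
        ⟨u, hu0, hu⟩ ⟨v, hv0, hv⟩
      exact hw2 (subset_closure (interior_subset hw1))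
    have hge : (1:Cardinal) ≤ Module.rank ℝ V :=
      Cardinal.one_le_iff_pos.2 (rank_pos_iff_nontrivial.2 ‹Nontrivial V›)
    exact le_antisymm hle hge
  have hfin : Module.finrank ℝ V = 1 := Module.rank_eq_one_iff_finrank_eq_one.1 hrank
  refine ⟨hfin, u, hu0, ?_⟩
  have hspan1 : ∀ w : V, ∃ c : ℝ, c • u = w :=
    (finrank_eq_one_iff_of_nonzero' u hu0).1 hfin
  ext y
  constructor
  · rintro (hy | hy)
    · obtain ⟨t, rfl⟩ := hspan1 y
      rcases lt_trichotomy t 0 with ht | rfl | ht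
      · exfalso
        have hmy : -(t • u) ∈ C := by
          have : (-t) • u ∈ C := hcone (-t) (by linarith) u (interior_subset hu)
          rwa [neg_smul] at this
        have h0 : t • u = 0 := hpt _ (subset_closure hy) (subset_closure hmy)
        have : t = 0 := by
          rcases smul_eq_zero.1 h0 with h | h
          · exact h
          · exact absurd h hu0
        linarith
      · exact ⟨0, le_refl 0, rfl⟩
      · exact ⟨t, le_of_lt ht, rfl⟩
    · have hy0 : y = 0 := hy
      exact ⟨0, le_refl 0, by simp [hy0]⟩
  · rintro ⟨t, ht, rfl⟩
    rcases eq_or_lt_of_le ht with rfl | ht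
    · right; simp
    · left; exact hcone t ht u (interior_subset hu)
end

section
/- Let C be a convex cone in a topological real vector space and let f : C → ℝ be a non-negative function that is positively homogeneous of degree α ≥ 1. Then f is sub-convex (all sublevel sets convex) if and only if f is convex. -/
theorem subconvex_iff_convex_of_homogeneous_degree {V : Type*} [AddCommGroup V] [Module ℝ V]
    [TopologicalSpace V] [IsTopologicalAddGroup V] [ContinuousSMul ℝ V]
    (C : Set V) (hcone : ∀ (l : ℝ), 0 < l → ∀ x ∈ C, l • x ∈ C) (hconv : Convex ℝ C)
    (f : V → ℝ) (hnn : ∀ x ∈ C, 0 ≤ f x) (α : ℝ) (hα : 1 ≤ α)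
    (hph : ∀ (l : ℝ), 0 < l → ∀ x ∈ C, f (l • x) = l ^ α * f x) :
    (∀ r : ℝ, Convex ℝ {x ∈ C | f x ≤ r}) ↔
    (∀ x ∈ C, ∀ y ∈ C, ∀ t : ℝ, 0 < t → t < 1 →
      f ((1 - t) • x + t • y) ≤ (1 - t) * f x + t * f y) := by
  have hα0 : (0:ℝ) < α := lt_of_lt_of_le one_pos hα
  constructor
  · intro hsub x hx y hy t ht0 ht1
    refine le_of_forall_pos_le_add ?_
    intro ε hε
    set a := f x + ε with ha
    set b := f y + ε with hb
    have ha0 : 0 < a := by have := hnn x hx; positivity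
    have hb0 : 0 < b := by have := hnn y hy; positivity
    set p := a ^ α⁻¹ with hpdef
    set q := b ^ α⁻¹ with hqdef
    have hp0 : 0 < p := Real.rpow_pos_of_pos ha0 _
    have hq0 : 0 < q := Real.rpow_pos_of_pos hb0 _
    have hpa : p ^ α = a := Real.rpow_inv_rpow ha0.le (ne_of_gt hα0)
    have hqb : q ^ α = b := Real.rpow_inv_rpow hb0.le (ne_of_gt hα0)
    set x' := p⁻¹ • x with hx'def
    set y' := q⁻¹ • y with hy'def
    have hx'C : x' ∈ C := hcone p⁻¹ (inv_pos.2 hp0) x hx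
    have hy'C : y' ∈ C := hcone q⁻¹ (inv_pos.2 hq0) y hy
    have hfx' : f x' ≤ 1 := by
      rw [hx'def, hph p⁻¹ (inv_pos.2 hp0) x hx, Real.inv_rpow hp0.le, hpa]
      rw [inv_mul_le_iff₀ ha0]
      nlinarith
    have hfy' : f y' ≤ 1 := by
      rw [hy'def, hph q⁻¹ (inv_pos.2 hq0) y hy, Real.inv_rpow hq0.le, hqb]
      rw [inv_mul_le_iff₀ hb0]
      nlinarith
    set u := (1 - t) * p with hu
    set v := t * q with hv
    have hu0 : 0 < u := mul_pos (by linarith) hp0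
    have hv0 : 0 < v := mul_pos ht0 hq0
    set s := u + v with hs
    have hs0 : 0 < s := by positivity
    have hw : (u / s) • x' + (v / s) • y' ∈ {z ∈ C | f z ≤ 1} := by
      refine hsub 1 ⟨hx'C, hfx'⟩ ⟨hy'C, hfy'⟩ (div_nonneg hu0.le hs0.le)
        (div_nonneg hv0.le hs0.le) ?_
      field_simp
      rw [hs]
    obtain ⟨hwC, hwf⟩ := hw
    have hz : (1 - t) • x + t • y = s • ((u / s) • x' + (v / s) • y') := by
      have e1 : s • ((u / s) • x') = (1 - t) • x := by
        rw [hx'def, smul_smul, smul_smul]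
        congr 1
        rw [hu]
        field_simp
      have e2 : s • ((v / s) • y') = t • y := by
        rw [hy'def, smul_smul, smul_smul]
        congr 1
        rw [hv]
        field_simp
      rw [smul_add, e1, e2]
    have key : f ((1 - t) • x + t • y) ≤ s ^ α := by
      rw [hz, hph s hs0 _ hwC]
      calc s ^ α * f _ ≤ s ^ α * 1 := by
            exact mul_le_mul_of_nonneg_left hwf (Real.rpow_nonneg hs0.le _)
        _ = s ^ α := mul_one _
    have hpow : s ^ α ≤ (1 - t) * a + t * b := by
      have := (convexOn_rpow hα).2 (Set.mem_Ici.2 hp0.le) (Set.mem_Ici.2 hq0.le)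
        (by linarith : (0:ℝ) ≤ 1 - t) ht0.le (by ring : (1 - t) + t = 1)
      simp only [smul_eq_mul] at this
      calc s ^ α = ((1 - t) * p + t * q) ^ α := by rw [hs, hu, hv]
        _ ≤ (1 - t) * p ^ α + t * q ^ α := this
        _ = (1 - t) * a + t * b := by rw [hpa, hqb]
    have : (1 - t) * a + t * b = (1 - t) * f x + t * f y + ε := by
      rw [ha, hb]; ring
    linarith
  · intro hcvx r
    rintro x ⟨hxC, hxr⟩ y ⟨hyC, hyr⟩ a b ha hb hab
    rcases eq_or_lt_of_le ha with h | ha'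
    · have hb1 : b = 1 := by linarith
      subst hb1
      simp only [← h, zero_smul, one_smul, zero_add]
      exact ⟨hyC, hyr⟩
    rcases eq_or_lt_of_le hb with h | hb'
    · have ha1 : a = 1 := by linarith
      subst ha1
      simp only [← h, zero_smul, one_smul, add_zero]
      exact ⟨hxC, hxr⟩
    · have ha1 : a = 1 - b := by linarith
      have hb1 : b < 1 := by linarith
      refine ⟨hconv hxC hyC ha hb hab, ?_⟩
      have := hcvx x hxC y hyC b hb' hb1
      rw [ha1]
      calc f ((1 - b) • x + b • y) ≤ (1 - b) * f x + b * f y := this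
        _ ≤ (1 - b) * r + b * r := by
            have h1b : 0 ≤ 1 - b := by linarith
            gcongr
        _ = r := by ring
end

section
/- Let V be a topological real vector space and f : V → ℝ a non-negative positively homogeneous function, and let α > 1 be a real number. Then the following are equivalent: (1) f is continuous and f^α is strictly convex; (2) f is continuous and strictly quasi-convex; (3) f is strictly sub-convex and f⁻¹(0) = {0}. -/
open Set Filter Topology

section AuxLemmas
variable {V : Type*} [AddCommGroup V] [Module ℝ V] [TopologicalSpace V]
  [IsTopologicalAddGroup V] [ContinuousSMul ℝ V]
set_option linter.unusedSectionVars false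
theorem aux_f0 (f : V → ℝ) (hph : ∀ (l : ℝ), 0 < l → ∀ x, f (l • x) = l * f x) :
    f 0 = 0 := by
  have h := hph 2 (by norm_num) 0
  rw [smul_zero] at h
  linarith

theorem aux_spanTop (f : V → ℝ) (hnn : ∀ x, 0 ≤ f x)
    (hph : ∀ (l : ℝ), 0 < l → ∀ x, f (l • x) = l * f x) (r : ℝ) (hr : 0 < r) :
    (affineSpan ℝ {x : V | f x ≤ r} : Set V) = Set.univ := by
  apply Set.eq_univ_of_forall
  intro x
  set C : Set V := {x : V | f x ≤ r} with hC
  have h0 : (0 : V) ∈ C := by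
    simp only [hC, Set.mem_setOf_eq, aux_f0 f hph]; exact hr.le
  set ε : ℝ := r / (f x + r) with hε
  have hεpos : 0 < ε := div_pos hr (by have := hnn x; linarith)
  have hmem : ε • x ∈ C := by
    simp only [hC, Set.mem_setOf_eq]
    rw [hph ε hεpos]
    rw [hε, div_mul_eq_mul_div, div_le_iff₀ (by have := hnn x; linarith)]
    have := hnn x
    nlinarith
  have h1 : ε • x ∈ affineSpan ℝ C := subset_affineSpan ℝ C hmem
  have h2 : (0 : V) ∈ affineSpan ℝ C := subset_affineSpan ℝ C h0
  have key := AffineSubspace.smul_vsub_vadd_mem (affineSpan ℝ C) ε⁻¹ h1 h2 h2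
  have : ε⁻¹ • (ε • x -ᵥ (0:V)) +ᵥ (0:V) = x := by
    simp [vsub_eq_sub, vadd_eq_add, smul_smul, inv_mul_cancel₀ hεpos.ne']
  rwa [this] at key

theorem aux_subadd (f : V → ℝ) (hnn : ∀ x, 0 ≤ f x)
    (hph : ∀ (l : ℝ), 0 < l → ∀ x, f (l • x) = l * f x)
    (hz : ∀ x, f x = 0 → x = 0)
    (hq : ∀ x y : V, ∀ t : ℝ, 0 < t → t < 1 →
      f ((1 - t) • x + t • y) ≤ max (f x) (f y)) :
    ∀ a b : V, f (a + b) ≤ f a + f b := by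
  intro a b
  rcases (hnn a).eq_or_lt with ha | ha
  · obtain rfl := hz a ha.symm
    simp [← ha]
  rcases (hnn b).eq_or_lt with hb | hb
  · obtain rfl := hz b hb.symm
    simp [← hb]
  set A := f a with hA
  set B := f b with hB
  have hAB : 0 < A + B := by linarith
  set t : ℝ := B / (A + B) with ht
  have ht0 : 0 < t := div_pos hb hAB
  have ht1 : t < 1 := (div_lt_one hAB).2 (by linarith)
  have hfa : f (A⁻¹ • a) = 1 := by rw [hph A⁻¹ (inv_pos.2 ha) a, inv_mul_cancel₀ ha.ne']
  have hfb : f (B⁻¹ • b) = 1 := by rw [hph B⁻¹ (inv_pos.2 hb) b, inv_mul_cancel₀ hb.ne']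
  have key := hq (A⁻¹ • a) (B⁻¹ • b) t ht0 ht1
  rw [hfa, hfb, max_self] at key
  have heq : (1 - t) • (A⁻¹ • a) + t • (B⁻¹ • b) = (A + B)⁻¹ • (a + b) := by
    rw [smul_smul, smul_smul, smul_add]
    congr 1
    · congr 1
      rw [ht]
      field_simp; ring
    · congr 1
      rw [ht]
      field_simp
  rw [heq, hph _ (inv_pos.2 hAB), inv_mul_le_iff₀ hAB, mul_one] at key
  exact key

theorem aux_conv (f : V → ℝ) (hnn : ∀ x, 0 ≤ f x)
    (hph : ∀ (l : ℝ), 0 < l → ∀ x, f (l • x) = l * f x)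
    (hz : ∀ x, f x = 0 → x = 0)
    (hq : ∀ x y : V, ∀ t : ℝ, 0 < t → t < 1 →
      f ((1 - t) • x + t • y) ≤ max (f x) (f y)) :
    ∀ x y : V, ∀ t : ℝ, 0 < t → t < 1 →
      f ((1 - t) • x + t • y) ≤ (1 - t) * f x + t * f y := by
  intro x y t ht0 ht1
  calc f ((1 - t) • x + t • y) ≤ f ((1 - t) • x) + f (t • y) :=
        aux_subadd f hnn hph hz hq _ _
    _ = (1 - t) * f x + t * f y := by
        rw [hph (1 - t) (by linarith) x, hph t ht0 y]


theorem aux_hz (f : V → ℝ) (hnn : ∀ x, 0 ≤ f x)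
    (hph : ∀ (l : ℝ), 0 < l → ∀ x, f (l • x) = l * f x)
    (hsq : ∀ x y : V, x ≠ y → ∀ t : ℝ, 0 < t → t < 1 →
        f ((1 - t) • x + t • y) < max (f x) (f y)) :
    ∀ x, f x = 0 → x = 0 := by
  intro x hx
  by_contra hx0
  have hne : (0 : V) ≠ (2 : ℝ) • x := by
    intro h
    exact hx0 (by simpa using (smul_eq_zero.1 h.symm).resolve_left (by norm_num))
  have key := hsq 0 ((2 : ℝ) • x) hne (1/2) (by norm_num) (by norm_num)
  have heq : (1 - 1/2 : ℝ) • (0 : V) + (1/2 : ℝ) • ((2:ℝ) • x) = x := by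
    rw [smul_zero, zero_add, smul_smul]; norm_num
  rw [heq, hx] at key
  have h2 : f ((2:ℝ) • x) = 0 := by rw [hph 2 (by norm_num) x, hx, mul_zero]
  have hf0 : f 0 = 0 := by
    have h := hph 2 (by norm_num) 0
    rw [smul_zero] at h; linarith
  rw [hf0, h2, max_self] at key
  exact absurd key (by norm_num)

/-- x = y combination -/
theorem aux_comb_self (x : V) (t : ℝ) : (1 - t) • x + t • x = x := by
  rw [← add_smul]
  norm_num

/-- nonstrict quasi-convexity from strict -/
theorem aux_hq_of_strict (f : V → ℝ)
    (hsq : ∀ x y : V, x ≠ y → ∀ t : ℝ, 0 < t → t < 1 →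
        f ((1 - t) • x + t • y) < max (f x) (f y)) :
    ∀ x y : V, ∀ t : ℝ, 0 < t → t < 1 →
      f ((1 - t) • x + t • y) ≤ max (f x) (f y) := by
  intro x y t ht0 ht1
  by_cases hxy : x = y
  · subst hxy
    rw [aux_comb_self, max_self]
  · exact (hsq x y hxy t ht0 ht1).le

theorem aux_P1_to_P2 (f : V → ℝ) (hnn : ∀ x, 0 ≤ f x) (α : ℝ) (hα : 1 < α)
    (h : ∀ x y : V, x ≠ y → ∀ t : ℝ, 0 < t → t < 1 →
        f ((1 - t) • x + t • y) ^ α < (1 - t) * f x ^ α + t * f y ^ α) :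
    ∀ x y : V, x ≠ y → ∀ t : ℝ, 0 < t → t < 1 →
        f ((1 - t) • x + t • y) < max (f x) (f y) := by
  intro x y hxy t ht0 ht1
  set M := max (f x) (f y) with hM
  have hMnn : 0 ≤ M := le_trans (hnn x) (le_max_left _ _)
  have hxα : f x ^ α ≤ M ^ α := Real.rpow_le_rpow (hnn x) (le_max_left _ _) (by linarith)
  have hyα : f y ^ α ≤ M ^ α := Real.rpow_le_rpow (hnn y) (le_max_right _ _) (by linarith)
  have key := h x y hxy t ht0 ht1
  have hlt : f ((1 - t) • x + t • y) ^ α < M ^ α := by nlinarith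
  by_contra hc
  push_neg at hc
  exact absurd (Real.rpow_le_rpow hMnn hc (by linarith)) (not_le.2 hlt)

theorem aux_P2_to_P1 (f : V → ℝ) (hnn : ∀ x, 0 ≤ f x)
    (hph : ∀ (l : ℝ), 0 < l → ∀ x, f (l • x) = l * f x) (α : ℝ) (hα : 1 < α)
    (hz : ∀ x, f x = 0 → x = 0)
    (hconv : ∀ x y : V, ∀ t : ℝ, 0 < t → t < 1 →
      f ((1 - t) • x + t • y) ≤ (1 - t) * f x + t * f y)
    (hsq : ∀ x y : V, x ≠ y → ∀ t : ℝ, 0 < t → t < 1 →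
        f ((1 - t) • x + t • y) < max (f x) (f y)) :
    ∀ x y : V, x ≠ y → ∀ t : ℝ, 0 < t → t < 1 →
        f ((1 - t) • x + t • y) ^ α < (1 - t) * f x ^ α + t * f y ^ α := by
  intro x y hxy t ht0 ht1
  set m := f ((1 - t) • x + t • y) with hm
  by_cases hab : f x = f y
  · have ha : 0 < f x := by
      rcases (hnn x).eq_or_lt with h | h
      · exfalso
        exact hxy ((hz x h.symm).trans (hz y (hab ▸ h.symm)).symm)
      · exact h
    have hlt : m < f x := by
      have := hsq x y hxy t ht0 ht1
      rwa [← hab, max_self] at this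
    have : m ^ α < f x ^ α := Real.rpow_lt_rpow (hnn _) hlt (by linarith)
    rw [← hab]
    nlinarith [this]
  · have hmle : m ≤ (1 - t) * f x + t * f y := hconv x y t ht0 ht1
    have h1 : m ^ α ≤ ((1 - t) * f x + t * f y) ^ α :=
      Real.rpow_le_rpow (hnn _) hmle (by linarith)
    have h2 := (strictConvexOn_rpow hα).2 (Set.mem_Ici.2 (hnn x)) (Set.mem_Ici.2 (hnn y))
      hab (by linarith : (0:ℝ) < 1 - t) ht0 (by ring)
    simp only [smul_eq_mul] at h2
    exact lt_of_le_of_lt h1 h2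


theorem aux_P2_to_P3 (f : V → ℝ) (hnn : ∀ x, 0 ≤ f x)
    (hph : ∀ (l : ℝ), 0 < l → ∀ x, f (l • x) = l * f x)
    (hcont : Continuous f)
    (hz : ∀ x, f x = 0 → x = 0)
    (hsq : ∀ x y : V, x ≠ y → ∀ t : ℝ, 0 < t → t < 1 →
        f ((1 - t) • x + t • y) < max (f x) (f y)) :
    ∀ r : ℝ, StrictlyConvexSet {x : V | f x ≤ r} := by
  intro r
  rcases lt_trichotomy r 0 with hr | hr | hr
  · -- empty sublevel set
    have hE : {x : V | f x ≤ r} = (∅ : Set V) := by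
      apply Set.eq_empty_of_forall_notMem
      intro x hx
      exact absurd (lt_of_le_of_lt hx hr) (not_lt.2 (hnn x))
    intro x hx
    rw [hE] at hx
    exact absurd hx.1 (by simp [relCl, closure_empty])
  · -- r = 0 : sublevel set is {0}
    subst hr
    have hf0 : f 0 = 0 := by
      have h := hph 2 (by norm_num) 0; rw [smul_zero] at h; linarith
    have hE : {x : V | f x ≤ 0} = ({0} : Set V) := by
      ext z
      simp only [Set.mem_setOf_eq, Set.mem_singleton_iff]
      constructor
      · intro h; exact hz z (le_antisymm h (hnn z))
      · rintro rfl; exact hf0.le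
    rw [hE]
    intro x hx y hy hxy
    exfalso
    apply hxy
    have hx' : x ∈ (affineSpan ℝ ({0} : Set V) : Set V) := hx.2
    have hy' : y ∈ (affineSpan ℝ ({0} : Set V) : Set V) := hy.2
    rw [AffineSubspace.coe_affineSpan_singleton] at hx' hy'
    rw [hx', hy']
  · -- r > 0
    have hspan := aux_spanTop f hnn hph r hr
    have hclosed : IsClosed {x : V | f x ≤ r} := isClosed_le hcont continuous_const
    intro x hx y hy hxy t ht0 ht1
    have hxC : f x ≤ r := by
      have := hx.1
      rwa [hclosed.closure_eq] at this
    have hyC : f y ≤ r := by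
      have := hy.1
      rwa [hclosed.closure_eq] at this
    have hm : f ((1 - t) • x + t • y) < r :=
      lt_of_lt_of_le (hsq x y hxy t ht0 ht1) (max_le hxC hyC)
    refine ⟨by rw [hspan]; trivial, {z : V | f z < r}, isOpen_lt hcont continuous_const, hm, ?_⟩
    intro z hzm
    simp only [Set.mem_setOf_eq] at hzm ⊢
    exact hzm.1.le


theorem aux_P3_to_P2 (f : V → ℝ) (hnn : ∀ x, 0 ≤ f x)
    (hph : ∀ (l : ℝ), 0 < l → ∀ x, f (l • x) = l * f x)
    (hsc : ∀ r : ℝ, StrictlyConvexSet {x : V | f x ≤ r})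
    (hz0 : {x : V | f x = 0} = {0}) :
    Continuous f ∧ (∀ x y : V, x ≠ y → ∀ t : ℝ, 0 < t → t < 1 →
        f ((1 - t) • x + t • y) < max (f x) (f y)) := by
  have hf0 : f 0 = 0 := by
    have h := hph 2 (by norm_num) 0; rw [smul_zero] at h; linarith
  have hz : ∀ x, f x = 0 → x = 0 := by
    intro x hx
    have : x ∈ ({0} : Set V) := hz0 ▸ (show x ∈ {x : V | f x = 0} from hx)
    simpa using this
  by_cases hEx : ∃ v : V, v ≠ 0
  swap
  · -- degenerate case : V трив
    push_neg at hEx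
    constructor
    · have : f = fun _ => (0:ℝ) := funext fun z => by rw [hEx z, hf0]
      rw [this]; exact continuous_const
    · intro x y hxy
      exact absurd ((hEx x).trans (hEx y).symm) hxy
  -- nonstrict quasi-convexity
  have hq : ∀ x y : V, ∀ t : ℝ, 0 < t → t < 1 →
      f ((1 - t) • x + t • y) ≤ max (f x) (f y) := by
    intro x y t ht0 ht1
    by_cases hxy : x = y
    · subst hxy
      have : (1 - t) • x + t • x = x := by rw [← add_smul]; norm_num
      rw [this, max_self]
    · set r := max (f x) (f y) with hr
      have hx : x ∈ relCl {z : V | f z ≤ r} :=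
        ⟨subset_closure (le_max_left (f x) (f y)), subset_affineSpan ℝ _ (le_max_left (f x) (f y))⟩
      have hy : y ∈ relCl {z : V | f z ≤ r} :=
        ⟨subset_closure (le_max_right (f x) (f y)), subset_affineSpan ℝ _ (le_max_right (f x) (f y))⟩
      obtain ⟨hspan, U, hU, hmU, hsub⟩ := hsc r x hx y hy hxy t ht0 ht1
      exact hsub ⟨hmU, hspan⟩
  have hsub := aux_subadd f hnn hph hz hq
  -- strict quasi-convexity
  have hstrict : ∀ x y : V, x ≠ y → ∀ t : ℝ, 0 < t → t < 1 →
      f ((1 - t) • x + t • y) < max (f x) (f y) := by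
    intro x y hxy t ht0 ht1
    set r := max (f x) (f y) with hrdef
    have hr : 0 < r := by
      rcases (hnn x).eq_or_lt with h | h
      · rcases (hnn y).eq_or_lt with h' | h'
        · exact absurd ((hz x h.symm).trans (hz y h'.symm).symm) hxy
        · exact lt_of_lt_of_le h' (le_max_right (f x) (f y))
      · exact lt_of_lt_of_le h (le_max_left (f x) (f y))
    have hspan := aux_spanTop f hnn hph r hr
    obtain ⟨_, W, hWopen, hmW, hWsub⟩ := hsc r x
      ⟨subset_closure (le_max_left (f x) (f y)), subset_affineSpan ℝ _ (le_max_left (f x) (f y))⟩ y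
      ⟨subset_closure (le_max_right (f x) (f y)), subset_affineSpan ℝ _ (le_max_right (f x) (f y))⟩
      hxy t ht0 ht1
    have hWC : W ⊆ {z : V | f z ≤ r} := fun z hzW => hWsub ⟨hzW, by rw [hspan]; trivial⟩
    set m := (1 - t) • x + t • y with hmdef
    have hmle : f m ≤ r := hWC hmW
    rcases hmle.lt_or_eq with h | h
    · exact h
    · exfalso
      have htend : Tendsto (fun s : ℝ => s • m) (𝓝[>] 1) (𝓝 m) := by
        have h1 : Tendsto (fun s : ℝ => s • m) (𝓝 1) (𝓝 ((1:ℝ) • m)) :=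
          ((continuous_id.smul continuous_const).tendsto 1)
        rw [one_smul] at h1
        exact h1.mono_left nhdsWithin_le_nhds
      have hev : ∀ᶠ s in 𝓝[>] (1:ℝ), s • m ∈ W :=
        htend.eventually (hWopen.eventually_mem hmW)
      obtain ⟨s, hsW, hs1⟩ := (hev.and eventually_mem_nhdsWithin).exists
      have hs1' : (1:ℝ) < s := hs1
      have hval : f (s • m) = s * f m := hph s (by linarith) m
      have hle : f (s • m) ≤ r := hWC hsW
      rw [hval, h] at hle
      nlinarith
  refine ⟨?_, hstrict⟩
  -- continuity: first find an open neighbourhood of 0 inside {f ≤ 1}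
  obtain ⟨v, hv⟩ := hEx
  set A := f v with hA
  set B := f (-v) with hB
  set ε : ℝ := (A + 1)⁻¹ with hεdef
  set ε' : ℝ := (B + 1)⁻¹ with hε'def
  have hAnn : 0 ≤ A := hnn v
  have hBnn : 0 ≤ B := hnn (-v)
  have hε : 0 < ε := inv_pos.2 (by linarith)
  have hε' : 0 < ε' := inv_pos.2 (by linarith)
  have hp : f (ε • v) ≤ 1 := by
    rw [hph ε hε v, hεdef]
    rw [inv_mul_le_iff₀ (by linarith)]
    linarith
  have hq2 : f (ε' • (-v)) ≤ 1 := by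
    rw [hph ε' hε' (-v), hε'def]
    rw [inv_mul_le_iff₀ (by linarith)]
    linarith
  have hpq : ε • v ≠ ε' • (-v) := by
    intro hcontra
    apply hv
    have h2 : (ε + ε') • v = 0 := by
      rw [add_smul]
      rw [smul_neg] at hcontra
      rw [hcontra]
      abel
    exact (smul_eq_zero.1 h2).resolve_left (ne_of_gt (add_pos hε hε'))
  set t : ℝ := ε / (ε + ε') with htdef
  have htpos : 0 < t := div_pos hε (add_pos hε hε')
  have htlt : t < 1 := (div_lt_one (add_pos hε hε')).2 (by linarith)
  have hcomb : (1 - t) • (ε • v) + t • (ε' • (-v)) = (0 : V) := by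
    have hs : (1 - t) * ε - t * ε' = 0 := by
      rw [htdef]; field_simp; ring
    calc (1 - t) • (ε • v) + t • (ε' • (-v))
        = ((1 - t) * ε - t * ε') • v := by
          rw [smul_neg, smul_neg, smul_smul, smul_smul, ← sub_eq_add_neg, ← sub_smul]
      _ = (0 : V) := by rw [hs, zero_smul]
  have hmem := hsc 1 (ε • v)
    ⟨subset_closure hp, subset_affineSpan ℝ _ hp⟩ (ε' • (-v))
    ⟨subset_closure hq2, subset_affineSpan ℝ _ hq2⟩ hpq t htpos htlt
  rw [hcomb] at hmem
  obtain ⟨_, U, hUopen, hU0, hUsub⟩ := hmem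
  have hspan1 := aux_spanTop f hnn hph 1 one_pos
  have hUC : ∀ u ∈ U, f u ≤ 1 := by
    intro u hu
    exact hUsub ⟨hu, by rw [hspan1]; trivial⟩
  -- continuity
  rw [continuous_iff_continuousAt]
  intro x
  rw [ContinuousAt, Metric.tendsto_nhds]
  intro δ hδ
  set c : ℝ := δ / 2 with hcdef
  have hc : 0 < c := by positivity
  set U2 : Set V := U ∩ (fun z : V => -z) ⁻¹' U with hU2def
  have hU2open : IsOpen U2 := hUopen.inter (hUopen.preimage continuous_neg)
  have hU20 : (0 : V) ∈ U2 := ⟨hU0, by simpa using hU0⟩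
  set N : Set V := (fun u : V => x + c • u) '' U2 with hNdef
  have hNopen : IsOpen N := by
    have h1 : IsOpenMap (fun u : V => c • u) := isOpenMap_smul₀ hc.ne'
    have h2 : IsOpenMap (fun u : V => x + u) := isOpenMap_add_left x
    exact (h2.comp h1) U2 hU2open
  have hxN : x ∈ N := ⟨0, hU20, by simp⟩
  filter_upwards [hNopen.mem_nhds hxN]
  rintro y ⟨u, hu, rfl⟩
  have hfu : f u ≤ 1 := hUC u hu.1
  have hfnu : f (-u) ≤ 1 := hUC (-u) hu.2
  have h1 : f (x + c • u) ≤ f x + c := by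
    have h := hsub x (c • u)
    rw [hph c hc u] at h
    nlinarith
  have h2 : f x ≤ f (x + c • u) + c := by
    have heq : x = (x + c • u) + c • (-u) := by rw [smul_neg]; abel
    have h := hsub (x + c • u) (c • (-u))
    rw [← heq, hph c hc (-u)] at h
    nlinarith
  rw [Real.dist_eq, abs_lt]
  constructor <;> [linarith; linarith]

end AuxLemmas

theorem strict_subconvexity_characterizations {V : Type*} [AddCommGroup V] [Module ℝ V]
    [TopologicalSpace V] [IsTopologicalAddGroup V] [ContinuousSMul ℝ V]
    (f : V → ℝ) (hnn : ∀ x, 0 ≤ f x)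
    (hph : ∀ (l : ℝ), 0 < l → ∀ x, f (l • x) = l * f x)
    (α : ℝ) (hα : 1 < α) :
    let P1 : Prop := Continuous f ∧
      (∀ x y : V, x ≠ y → ∀ t : ℝ, 0 < t → t < 1 →
        f ((1 - t) • x + t • y) ^ α < (1 - t) * f x ^ α + t * f y ^ α)
    let P2 : Prop := Continuous f ∧
      (∀ x y : V, x ≠ y → ∀ t : ℝ, 0 < t → t < 1 →
        f ((1 - t) • x + t • y) < max (f x) (f y))
    let P3 : Prop := (∀ r : ℝ, StrictlyConvexSet {x : V | f x ≤ r}) ∧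
      {x : V | f x = 0} = {0}
    (P1 ↔ P2) ∧ (P2 ↔ P3) := by
  intro P1 P2 P3
  constructor
  · constructor
    · rintro ⟨hc, h⟩
      exact ⟨hc, aux_P1_to_P2 f hnn α hα h⟩
    · rintro ⟨hc, h⟩
      have hz := aux_hz f hnn hph h
      have hq := aux_hq_of_strict f h
      exact ⟨hc, aux_P2_to_P1 f hnn hph α hα hz (aux_conv f hnn hph hz hq) h⟩
  · constructor
    · rintro ⟨hc, h⟩
      have hz := aux_hz f hnn hph h
      refine ⟨aux_P2_to_P3 f hnn hph hc hz h, ?_⟩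
      ext z
      simp only [Set.mem_setOf_eq, Set.mem_singleton_iff]
      exact ⟨hz z, fun hz' => by rw [hz']; exact aux_f0 f hph⟩
    · rintro ⟨hsc, hz0⟩
      exact aux_P3_to_P2 f hnn hph hsc hz0
end

section
/- Let V be a topological real vector space, N : V → ℝ a function, and α > 1 a real number. Then N is a strictly sub-convex Minkowski norm on V if and only if N is non-negative, positively homogeneous, continuous, and N^α is strictly convex. -/
open Set

set_option linter.unusedSectionVars false

section aux
variable {V : Type*} [AddCommGroup V] [Module ℝ V] [TopologicalSpace V]

theorem aux_N_zero (N : V → ℝ)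
    (h2 : ∀ l : ℝ, 0 < l → ∀ x, N (l • x) = l * N x) : N 0 = 0 := by
  have h := h2 2 (by norm_num) 0
  rw [smul_zero] at h
  linarith

theorem aux_span (N : V → ℝ) (h1 : ∀ x, 0 ≤ N x)
    (h2 : ∀ l : ℝ, 0 < l → ∀ x, N (l • x) = l * N x) {r : ℝ} (hr : 0 < r) :
    (affineSpan ℝ {x : V | N x ≤ r} : Set V) = Set.univ := by
  apply Set.eq_univ_of_forall
  intro x
  have hN0 : N 0 = 0 := aux_N_zero N h2
  have h0 : (0:V) ∈ {x : V | N x ≤ r} := by simp [hN0, hr.le]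
  have hxr : 0 < N x + r := by linarith [h1 x]
  set c : ℝ := r / (N x + r) with hc
  have hcpos : 0 < c := div_pos hr hxr
  have hcx : c • x ∈ {x : V | N x ≤ r} := by
    simp only [Set.mem_setOf_eq, h2 c hcpos x]
    rw [hc, div_mul_eq_mul_div, div_le_iff₀ hxr]
    nlinarith [h1 x]
  have key := AffineSubspace.smul_vsub_vadd_mem (affineSpan ℝ {x : V | N x ≤ r}) c⁻¹
    (subset_affineSpan ℝ _ hcx) (subset_affineSpan ℝ _ h0) (subset_affineSpan ℝ _ h0)
  simpa [vsub_eq_sub, smul_smul, inv_mul_cancel₀ hcpos.ne'] using key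

end aux


theorem minkowski_norm_strictly_subconvex_iff {V : Type*} [AddCommGroup V] [Module ℝ V]
    [TopologicalSpace V] [IsTopologicalAddGroup V] [ContinuousSMul ℝ V]
    (N : V → ℝ) (α : ℝ) (hα : 1 < α) :
    ((∀ x, 0 ≤ N x) ∧
     (∀ (l : ℝ), 0 < l → ∀ x, N (l • x) = l * N x) ∧
     (∀ x y, N (x + y) ≤ N x + N y) ∧
     (∀ x, x ≠ 0 → N x ≠ 0) ∧
     (∀ r : ℝ, StrictlyConvexSet {x : V | N x ≤ r})) ↔
    ((∀ x, 0 ≤ N x) ∧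
     (∀ (l : ℝ), 0 < l → ∀ x, N (l • x) = l * N x) ∧
     Continuous N ∧
     (∀ x y : V, x ≠ y → ∀ t : ℝ, 0 < t → t < 1 →
       N ((1 - t) • x + t • y) ^ α < (1 - t) * N x ^ α + t * N y ^ α)) := by
  constructor
  · rintro ⟨h1, h2, h3, h4, h5⟩
    have hN0 : N 0 = 0 := aux_N_zero N h2
    -- key: sublevel sets at positive level are neighbourhoods of 0
    have key : ∀ ε : ℝ, 0 < ε → ∃ U : Set V, IsOpen U ∧ (0:V) ∈ U ∧ ∀ u ∈ U, N u < ε := by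
      intro ε hε
      by_cases hV : ∃ v : V, v ≠ 0
      · obtain ⟨v, hv⟩ := hV
        have ha : 0 < N v := (h1 v).lt_of_ne (Ne.symm (h4 v hv))
        have hb : 0 < N (-v) := (h1 (-v)).lt_of_ne (Ne.symm (h4 (-v) (neg_ne_zero.mpr hv)))
        set p : ℝ := ε / (2 * N v) with hp
        set q : ℝ := ε / (2 * N (-v)) with hq
        have hppos : 0 < p := div_pos hε (by linarith)
        have hqpos : 0 < q := div_pos hε (by linarith)
        set x : V := p • v with hxdef
        set y : V := q • (-v) with hydef
        have hxC : x ∈ {w : V | N w ≤ ε / 2} := by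
          simp only [Set.mem_setOf_eq, hxdef, h2 p hppos v, hp]
          rw [h2 _ (by rw [← hp]; exact hppos)]
          rw [div_mul_eq_mul_div]
          rw [div_le_div_iff₀ (by linarith) (by norm_num)]
          ring_nf
          nlinarith
        have hyC : y ∈ {w : V | N w ≤ ε / 2} := by
          simp only [Set.mem_setOf_eq, hydef, h2 q hqpos (-v), hq]
          rw [h2 _ (by rw [← hq]; exact hqpos)]
          rw [div_mul_eq_mul_div]
          rw [div_le_div_iff₀ (by linarith) (by norm_num)]
          ring_nf
          nlinarith
        have hxy : x ≠ y := by
          intro h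
          apply hv
          have h' : (p + q) • v = 0 := by
            rw [add_smul]
            rw [hxdef] at h
            rw [h, hydef, smul_neg]
            abel
          have := congrArg (fun w => (p + q)⁻¹ • w) h'
          simpa [smul_smul, inv_mul_cancel₀ (by positivity : (p+q) ≠ 0)] using this
        set t : ℝ := p / (p + q) with ht
        have hpq : 0 < p + q := by linarith
        have ht0 : 0 < t := div_pos hppos hpq
        have ht1 : t < 1 := by rw [ht, div_lt_one hpq]; linarith
        have hcomb : (1 - t) • x + t • y = (0 : V) := by
          rw [hxdef, hydef, smul_smul, smul_smul, smul_neg, ← sub_eq_add_neg, ← sub_smul]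
          have : (1 - t) * p - t * q = 0 := by
            rw [ht]; field_simp; ring
          rw [this, zero_smul]
        have hmem := h5 (ε/2) x ⟨subset_closure hxC, subset_affineSpan ℝ _ hxC⟩
          y ⟨subset_closure hyC, subset_affineSpan ℝ _ hyC⟩ hxy t ht0 ht1
        rw [hcomb] at hmem
        obtain ⟨-, U, hUo, hU0, hUsub⟩ := hmem
        refine ⟨U, hUo, hU0, fun u hu => ?_⟩
        have : u ∈ {w : V | N w ≤ ε / 2} := by
          apply hUsub
          refine ⟨hu, ?_⟩
          rw [aux_span N h1 h2 (by linarith : (0:ℝ) < ε/2)]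
          trivial
        simp only [Set.mem_setOf_eq] at this
        linarith
      · push_neg at hV
        refine ⟨Set.univ, isOpen_univ, trivial, fun u _ => ?_⟩
        rw [hV u, hN0]; exact hε
    -- continuity
    have hcont : Continuous N := by
      rw [continuous_iff_continuousAt]
      intro x
      rw [ContinuousAt, Metric.tendsto_nhds]
      intro ε hε
      obtain ⟨U, hUo, hU0, hUb⟩ := key ε hε
      set W : Set V := U ∩ (fun v => -v) ⁻¹' U with hW
      have hWo : IsOpen W := hUo.inter (hUo.preimage continuous_neg)
      have hW0 : (0:V) ∈ W := ⟨hU0, by simpa using hU0⟩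
      have hSo : IsOpen ((fun y : V => y - x) ⁻¹' W) :=
        hWo.preimage (continuous_id.sub continuous_const)
      have hxS : x ∈ (fun y : V => y - x) ⁻¹' W := by simpa using hW0
      filter_upwards [hSo.mem_nhds hxS] with y hy
      obtain ⟨hy1, hy2⟩ := hy
      have e1 : N y ≤ N x + N (y - x) := by
        have := h3 x (y - x); rwa [add_sub_cancel] at this
      have e2 : N x ≤ N y + N (x - y) := by
        have := h3 y (x - y); rwa [add_sub_cancel] at this
      have b1 : N (y - x) < ε := hUb _ hy1
      have b2 : N (x - y) < ε := by
        have h' : -(y - x) ∈ U := hy2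
        rw [neg_sub] at h'
        exact hUb _ h'
      rw [Real.dist_eq, abs_lt]
      constructor <;> linarith
    refine ⟨h1, h2, hcont, ?_⟩
    -- strict convexity of N ^ α
    intro x y hxy t ht0 ht1
    have h1t : 0 < 1 - t := by linarith
    by_cases hab : N x = N y
    · -- equal values
      have hrpos : 0 < N x := by
        rcases (h1 x).lt_or_eq with h | h
        · exact h
        · exfalso
          have hx0 : x = 0 := by
            by_contra hx
            exact h4 x hx h.symm
          have hy0 : y = 0 := by
            by_contra hy
            exact h4 y hy (hab.symm.trans h.symm)
          exact hxy (hx0.trans hy0.symm)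
      set r : ℝ := N x with hr
      have hxC : x ∈ {w : V | N w ≤ r} := le_refl r
      have hyC : y ∈ {w : V | N w ≤ r} := le_of_eq hab.symm
      have hmem := h5 r x ⟨subset_closure hxC, subset_affineSpan ℝ _ hxC⟩
        y ⟨subset_closure hyC, subset_affineSpan ℝ _ hyC⟩ hxy t ht0 ht1
      obtain ⟨-, U, hUo, hzU, hUsub⟩ := hmem
      have hUC : U ⊆ {w : V | N w ≤ r} := by
        intro w hw
        apply hUsub
        refine ⟨hw, ?_⟩
        rw [aux_span N h1 h2 hrpos]
        trivial
      set z : V := (1 - t) • x + t • y with hz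
      have hzr : N z ≤ r := hUC hzU
      have hzlt : N z < r := by
        rcases hzr.lt_or_eq with h | h
        · exact h
        · exfalso
          -- find s > 1 with s • z ∈ U
          have hcont2 : Continuous fun s : ℝ => s • z := continuous_id.smul continuous_const
          have h1U : (fun s : ℝ => s • z) ⁻¹' U ∈ nhds (1:ℝ) := by
            apply (hUo.preimage hcont2).mem_nhds
            simp only [Set.mem_preimage, one_smul]
            exact hzU
          obtain ⟨δ, hδ, hball⟩ := Metric.mem_nhds_iff.mp h1U
          have hs : (1 + δ/2) • z ∈ U := by
            apply hball
            rw [Metric.mem_ball, Real.dist_eq, abs_lt]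
            constructor <;> linarith
          have := hUC hs
          simp only [Set.mem_setOf_eq] at this
          rw [h2 (1 + δ/2) (by linarith) z, h] at this
          nlinarith
      calc N z ^ α < r ^ α := Real.rpow_lt_rpow (h1 z) hzlt (by linarith)
        _ = (1 - t) * N x ^ α + t * N y ^ α := by rw [← hab]; ring
    · -- distinct values
      have hconv : N ((1 - t) • x + t • y) ≤ (1 - t) * N x + t * N y := by
        calc N ((1 - t) • x + t • y) ≤ N ((1 - t) • x) + N (t • y) := h3 _ _
          _ = (1 - t) * N x + t * N y := by rw [h2 _ h1t, h2 _ ht0]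
      have hstrict := (strictConvexOn_rpow hα).2 (Set.mem_Ici.mpr (h1 x))
        (Set.mem_Ici.mpr (h1 y)) hab h1t ht0 (by ring)
      simp only [smul_eq_mul] at hstrict
      calc N ((1 - t) • x + t • y) ^ α
          ≤ ((1 - t) * N x + t * N y) ^ α := by
            apply Real.rpow_le_rpow (h1 _) hconv (by linarith)
        _ < (1 - t) * N x ^ α + t * N y ^ α := hstrict
  · rintro ⟨h1, h2, h3, h4⟩
    have hN0 : N 0 = 0 := aux_N_zero N h2
    have hα0 : (0:ℝ) < α := by linarith
    -- nondegeneracy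
    have hnd : ∀ x : V, x ≠ 0 → N x ≠ 0 := by
      intro x hx hNx
      have hx2 : x ≠ (2:ℝ) • x := by
        intro h
        apply hx
        have : (1:ℝ) • x = (2:ℝ) • x := by rw [one_smul]; exact h
        have h' : ((2:ℝ) - 1) • x = 0 := by rw [sub_smul, ← this, sub_self]
        rcases smul_eq_zero.mp h' with h'' | h''
        · norm_num at h''
        · exact h''
      have hN2 : N ((2:ℝ) • x) = 0 := by rw [h2 2 (by norm_num) x, hNx, mul_zero]
      have hlt := h4 x ((2:ℝ) • x) hx2 (1/2) (by norm_num) (by norm_num)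
      rw [hNx, hN2, Real.zero_rpow hα0.ne'] at hlt
      norm_num at hlt
      exact absurd hlt (not_lt.mpr (Real.rpow_nonneg (h1 _) α))
    -- subadditivity
    have hsub : ∀ x y : V, N (x + y) ≤ N x + N y := by
      intro x y
      rcases (h1 x).eq_or_lt with hax | hax
      · have hx0 : x = 0 := by
          by_contra h; exact hnd x h hax.symm
        rw [hx0, zero_add]; linarith [h1 (0:V)]
      rcases (h1 y).eq_or_lt with hby | hby
      · have hy0 : y = 0 := by
          by_contra h; exact hnd y h hby.symm
        rw [hy0, add_zero]; linarith [h1 (0:V)]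
      set a : ℝ := N x with ha
      set b : ℝ := N y with hb
      set u : V := a⁻¹ • x with hu
      set w : V := b⁻¹ • y with hw
      have hNu : N u = 1 := by rw [hu, h2 a⁻¹ (inv_pos.mpr hax) x, ← ha, inv_mul_cancel₀ hax.ne']
      have hNw : N w = 1 := by rw [hw, h2 b⁻¹ (inv_pos.mpr hby) y, ← hb, inv_mul_cancel₀ hby.ne']
      have hab : 0 < a + b := by linarith
      set t : ℝ := b / (a + b) with htdef
      have ht0 : 0 < t := div_pos hby hab
      have ht1 : t < 1 := by rw [htdef, div_lt_one hab]; linarith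
      set z : V := (1 - t) • u + t • w with hz
      have ha' : a ≠ 0 := hax.ne'
      have hb' : b ≠ 0 := hby.ne'
      have hab' : a + b ≠ 0 := hab.ne'
      have hcomb : (a + b) • z = x + y := by
        rw [hz, hu, hw, htdef]
        match_scalars <;> field_simp <;> ring
      have hNz : N z ≤ 1 := by
        by_cases huw : u = w
        · rw [hz, huw, ← add_smul]
          have : (1 - t) + t = 1 := by ring
          rw [this, one_smul, hNw]
        · have := h4 u w huw t ht0 ht1
          rw [hNu, hNw, Real.one_rpow] at this
          have h' : N z ^ α < 1 := by rw [hz]; linarith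
          by_contra h
          push_neg at h
          have : (1:ℝ) ≤ N z ^ α := by
            calc (1:ℝ) = 1 ^ α := (Real.one_rpow α).symm
              _ ≤ N z ^ α := Real.rpow_le_rpow (by norm_num) h.le hα0.le
          linarith
      calc N (x + y) = N ((a + b) • z) := by rw [hcomb]
        _ = (a + b) * N z := h2 (a + b) hab z
        _ ≤ (a + b) * 1 := by nlinarith
        _ = a + b := mul_one _
    -- strictly convex sublevel sets
    refine ⟨h1, h2, hsub, hnd, ?_⟩
    intro r
    rcases lt_trichotomy r 0 with hr | hr | hr
    · -- empty
      intro x hx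
      exfalso
      have hCe : {x : V | N x ≤ r} = (∅ : Set V) := by
        ext w; simp only [Set.mem_setOf_eq, Set.mem_empty_iff_false, iff_false, not_le]
        exact lt_of_lt_of_le hr (h1 w)
      rw [relCl, hCe] at hx
      simpa using hx.1
    · -- r = 0 : singleton
      subst hr
      intro x hx y hy hxy
      exfalso
      have hC0 : {w : V | N w ≤ 0} = {(0:V)} := by
        ext w
        simp only [Set.mem_setOf_eq, Set.mem_singleton_iff]
        constructor
        · intro h
          by_contra hw
          exact hnd w hw (le_antisymm h (h1 w))
        · rintro rfl; rw [hN0]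
      have hclosed : IsClosed {w : V | N w ≤ (0:ℝ)} :=
        isClosed_le h3 continuous_const
      have hx' : x ∈ {w : V | N w ≤ (0:ℝ)} := hclosed.closure_subset hx.1
      have hy' : y ∈ {w : V | N w ≤ (0:ℝ)} := hclosed.closure_subset hy.1
      rw [hC0] at hx' hy'
      exact hxy (hx'.trans hy'.symm)
    · -- r > 0
      intro x hx y hy hxy t ht0 ht1
      have hclosed : IsClosed {w : V | N w ≤ r} := isClosed_le h3 continuous_const
      have hxr : N x ≤ r := hclosed.closure_subset hx.1
      have hyr : N y ≤ r := hclosed.closure_subset hy.1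
      have hlt : N ((1 - t) • x + t • y) < r := by
        have h' := h4 x y hxy t ht0 ht1
        have hxα : N x ^ α ≤ r ^ α := Real.rpow_le_rpow (h1 x) hxr hα0.le
        have hyα : N y ^ α ≤ r ^ α := Real.rpow_le_rpow (h1 y) hyr hα0.le
        have : N ((1 - t) • x + t • y) ^ α < r ^ α := by nlinarith
        by_contra h
        push_neg at h
        have : r ^ α ≤ N ((1 - t) • x + t • y) ^ α :=
          Real.rpow_le_rpow hr.le h hα0.le
        linarith
      refine ⟨?_, {w : V | N w < r}, ?_, hlt, ?_⟩
      · rw [aux_span N h1 h2 hr]; trivial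
      · exact isOpen_lt h3 continuous_const
      · rintro w ⟨hw1, -⟩
        simp only [Set.mem_setOf_eq] at hw1 ⊢
        exact hw1.le
end
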